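/- arXiv:1802.08968 — 2 statements merged into one kernel-verified Lean document; each statement's English description precedes it below -/
import Mathlib

section
/- If there exists a GDD(m,n;3,λ) with m,n ≥ 1, then λ/3 ≤ (m−1)/n + (n−1)/m, i.e., λmn ≤ 3n(n−1) + 3m(m−1). -/
/-!
Count, for every block, the pairs of its points lying in the two groups. A block with `l` points
in the first group and `r` in the second contains `l * r` cross pairs and `l * (l - 1) + r * (r - 1)`
ordered same-group pairs, and `l * r ≤ l * (l - 1) + r * (r - 1)` once `l + r = 3`. Summing over the
blocks, the left side counts every cross pair `λ` times and the right side every ordered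
same-group pair `3` times, so `λ m n ≤ 3 m (m - 1) + 3 n (n - 1)`.
-/

open Finset

/-- A `GDD(m, n; λ₁, λ₂)`: a collection `B` of 3-element blocks on the
`(m+n)`-set `Fin m ⊕ Fin n` (groups `Fin m` and `Fin n`) such that each pair
of distinct symbols from the same group lies in exactly `λ₁` blocks and each
pair of symbols from different groups lies in exactly `λ₂` blocks. -/
def IsGDD (m n lam1 lam2 : ℕ) (B : Multiset (Finset (Fin m ⊕ Fin n))) : Prop :=
  (∀ b ∈ B, b.card = 3) ∧
  (∀ x y : Fin m ⊕ Fin n, x ≠ y → x.isLeft = y.isLeft →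
    (B.filter (fun b => x ∈ b ∧ y ∈ b)).card = lam1) ∧
  (∀ x y : Fin m ⊕ Fin n, x.isLeft ≠ y.isLeft →
    (B.filter (fun b => x ∈ b ∧ y ∈ b)).card = lam2)

theorem Multiset.sum_card_filter_eq_sum_map_card_filter {α β : Type*} (B : Multiset β)
    (S : Finset α) (Q : α → β → Prop) [∀ a b, Decidable (Q a b)] :
    ∑ a ∈ S, (B.filter (Q a)).card = (B.map fun b => #(S.filter (Q · b))).sum := by
  induction B using Multiset.induction with
  | empty => simp
  | cons c B ih =>
    simp only [Multiset.filter_cons, Multiset.map_cons, Multiset.sum_cons, Multiset.card_add,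
      sum_add_distrib, ih, card_filter]
    congr 1
    exact sum_congr rfl fun a _ => by split <;> simp

section BlockCounting

variable {V : Type*} [DecidableEq V] (B : Multiset (Finset V))

theorem sum_map_card_inter_mul_card_inter {s t : Finset V} {lam : ℕ}
    (h : ∀ x ∈ s, ∀ y ∈ t, (B.filter fun b => x ∈ b ∧ y ∈ b).card = lam) :
    (B.map fun b => #(s ∩ b) * #(t ∩ b)).sum = #s * #t * lam := by
  have hpairs := B.sum_card_filter_eq_sum_map_card_filter (s ×ˢ t)
    fun p b => p.1 ∈ b ∧ p.2 ∈ b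
  rw [sum_congr rfl fun p hp => h p.1 (mem_product.1 hp).1 p.2 (mem_product.1 hp).2,
    sum_const, card_product, smul_eq_mul] at hpairs
  simp only [hpairs, filter_product, filter_mem_eq_inter, card_product]

theorem sum_map_card_inter_mul_card_inter_sub_one {s : Finset V} {lam : ℕ}
    (h : ∀ x ∈ s, ∀ y ∈ s, x ≠ y → (B.filter fun b => x ∈ b ∧ y ∈ b).card = lam) :
    (B.map fun b => #(s ∩ b) * (#(s ∩ b) - 1)).sum = #s * (#s - 1) * lam := by
  have hpairs := B.sum_card_filter_eq_sum_map_card_filter s.offDiag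
    fun p b => p.1 ∈ b ∧ p.2 ∈ b
  rw [sum_congr rfl fun p hp => h p.1 (mem_offDiag.1 hp).1 p.2 (mem_offDiag.1 hp).2.1
    (mem_offDiag.1 hp).2.2, sum_const, offDiag_card, smul_eq_mul] at hpairs
  have hfilter : ∀ b : Finset V,
      s.offDiag.filter (fun p => p.1 ∈ b ∧ p.2 ∈ b) = (s ∩ b).offDiag := by
    intro b
    ext p
    simp only [mem_filter, mem_offDiag, mem_inter]
    tauto
  simp only [hfilter, offDiag_card, ← Nat.mul_sub_one] at hpairs
  exact hpairs.symm

end BlockCounting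

theorem mul_le_mul_sub_one_add_mul_sub_one {l r : ℕ} (h : 2 < l + r) :
    l * r ≤ l * (l - 1) + r * (r - 1) := by
  rcases Nat.eq_zero_or_pos l with rfl | hl
  · simp
  rcases Nat.eq_zero_or_pos r with rfl | hr
  · simp
  -- `l² + r² - l r - l - r = ((l - r)² + (l - 1)² + (r - 1)² - 2) / 2`, negative only at `l = r = 1`
  zify [hl, hr]
  nlinarith [sq_nonneg ((l : ℤ) - r), sq_nonneg ((l : ℤ) - 1), sq_nonneg ((r : ℤ) - 1)]

theorem stmt_2_general (m n lam : ℕ)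
    (h : ∃ B : Multiset (Finset (Fin m ⊕ Fin n)), IsGDD m n 3 lam B) :
    lam * m * n ≤ 3 * n * (n - 1) + 3 * m * (m - 1) := by
  obtain ⟨B, hcard, hsame, hcross⟩ := h
  set L : Finset (Fin m ⊕ Fin n) := univ.map .inl
  have hL : ∀ x, x ∈ L ↔ x.isLeft := fun x => by cases x <;> simp [L]
  have hLc : ∀ x, x ∈ Lᶜ ↔ x.isLeft = false := fun x => by simp [hL]
  have hcrossSum := sum_map_card_inter_mul_card_inter B (s := L) (t := Lᶜ) fun x hx y hy =>
    hcross x y (by rw [(hL x).1 hx, (hLc y).1 hy]; decide)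
  have hsameL := sum_map_card_inter_mul_card_inter_sub_one B (s := L) fun x hx y hy hxy =>
    hsame x y hxy (by rw [(hL x).1 hx, (hL y).1 hy])
  have hsameR := sum_map_card_inter_mul_card_inter_sub_one B (s := Lᶜ) fun x hx y hy hxy =>
    hsame x y hxy (by rw [(hLc x).1 hx, (hLc y).1 hy])
  have hsplit : ∀ b ∈ B, #(L ∩ b) + #(Lᶜ ∩ b) = 3 := fun b hb => by
    rw [inter_comm, inter_comm Lᶜ, ← sdiff_eq_inter_compl, card_inter_add_card_sdiff, hcard b hb]
  have hcardL : #L = m := by simp [L]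
  have hcardR : #Lᶜ = n := by simp [L, card_compl]
  calc lam * m * n = (B.map fun b => #(L ∩ b) * #(Lᶜ ∩ b)).sum := by rw [hcrossSum, hcardL, hcardR]; ring
    _ ≤ (B.map fun b => #(L ∩ b) * (#(L ∩ b) - 1) + #(Lᶜ ∩ b) * (#(Lᶜ ∩ b) - 1)).sum :=
      Multiset.sum_map_le_sum_map _ _ fun b hb =>
        mul_le_mul_sub_one_add_mul_sub_one (by rw [hsplit b hb]; norm_num)
    _ = 3 * n * (n - 1) + 3 * m * (m - 1) := by
      rw [Multiset.sum_map_add, hsameL, hsameR, hcardL, hcardR]; ring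

theorem stmt_2 (m n lam : ℕ) (hm : 1 ≤ m) (hn : 1 ≤ n)
    (h : ∃ B : Multiset (Finset (Fin m ⊕ Fin n)), IsGDD m n 3 lam B) :
    lam * m * n ≤ 3 * n * (n - 1) + 3 * m * (m - 1) :=
  stmt_2_general m n lam h
end

section
/- Let m > n be positive integers with n even and n ≥ √(3m) + 2 (i.e., (n−2)² ≥ 3m). If λ is an integer with λ ≤ 3(m−1)/n + 3(n−1)/m, then λ ≤ n−1. -/
theorem stmt_18 (m n : ℕ) (lam : ℤ) (hmn : n < m) (hne : Even n)
    (hnm : 3 * m ≤ (n - 2) ^ 2)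
    (hle : (lam : ℝ) ≤ 3 * ((m : ℝ) - 1) / n + 3 * ((n : ℝ) - 1) / m) :
    lam ≤ (n : ℤ) - 1 := by
  have hn4 : 4 ≤ n := by
    by_contra h
    push_neg at h
    interval_cases n <;> simp_all <;> omega
  have hm : (n:ℝ) < m := by exact_mod_cast hmn
  have hn : (4:ℝ) ≤ n := by exact_mod_cast hn4
  have hnm' : 3*(m:ℝ) ≤ ((n:ℝ)-2)^2 := by
    have h2 : (2:ℕ) ≤ n := by omega
    have := (Nat.cast_le (α:=ℝ)).mpr hnm
    push_cast [Nat.cast_sub h2] at this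
    linarith
  have hn0 : (0:ℝ) < n := by linarith
  have hm0 : (0:ℝ) < m := by linarith
  have key : 3 * ((m : ℝ) - 1) / n + 3 * ((n : ℝ) - 1) / m < n := by
    rw [div_add_div _ _ (ne_of_gt hn0) (ne_of_gt hm0), div_lt_iff₀ (by positivity)]
    nlinarith [mul_le_mul_of_nonneg_right hnm' hm0.le, mul_pos hn0 hm0]
  have hlt : (lam:ℝ) < n := lt_of_le_of_lt hle key
  have : lam < (n:ℤ) := by exact_mod_cast hlt
  omega
end
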